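/- Let S be a dense subsemigroup of ((0,∞),+) and let B, M ∈ M₀(S), with B having rows indexed by the positive ordinal α. Then the matrix (1̄ B 0 ; 0̄ 0 M), where 1̄ is the α×1 column of all 1's, belongs to M₀(S). Consequently, for any n ∈ ℕ and M₁,…,Mₙ ∈ M₀(S), the iterated block matrix with rows (1̄ M₁ 0 ⋯ 0), (0 0 1̄ M₂ ⋯ 0), …, (0 ⋯ 0 Mₙ) belongs to M₀(S). -/

import Mathlib

noncomputable section

/-- Addition of ultrafilters on ℝ: `B ∈ uAdd p q ↔ {x | {y | x + y ∈ B} ∈ q} ∈ p`. -/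
def uAdd (p q : Ultrafilter ℝ) : Ultrafilter ℝ :=
  p.bind fun x => q.map fun y => x + y

/-- `S` is a subsemigroup of `((0,∞),+)`. -/
def IsPosSubsemigroup (S : Set ℝ) : Prop :=
  S.Nonempty ∧ S ⊆ Set.Ioi 0 ∧ ∀ x ∈ S, ∀ y ∈ S, x + y ∈ S

/-- `0` is a limit point of `S`. -/
def DenseNearZero (S : Set ℝ) : Prop := ∀ ε > 0, ∃ x ∈ S, x < ε

/-- the `i`-th entry of `A x⃗`. -/
def mEntry {ι κ : Type} (A : ι → κ → ℚ) (x : κ → ℝ) (i : ι) : ℝ :=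
  ∑ᶠ j, (A i j : ℝ) * x j

/-- admissible matrix: no zero row, finitely many nonzero entries in each row. -/
def Admissible {ι κ : Type} (A : ι → κ → ℚ) : Prop :=
  (∀ i, A i ≠ 0) ∧ ∀ i, (Function.support (A i)).Finite

/-- `A` is image partition regular over `S`. -/
def IPRover {ι κ : Type} (S : Set ℝ) (A : ι → κ → ℚ) : Prop :=
  ∀ (k : ℕ) (c : ℝ → Fin (k + 1)), ∃ x : κ → ℝ, (∀ j, x j ∈ S) ∧
    ∃ m : Fin (k + 1), ∀ i, mEntry A x i ∈ S \ {0} ∧ c (mEntry A x i) = m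

/-- `A` is image partition regular near zero over `S`. -/
def IPRNearZero {ι κ : Type} (S : Set ℝ) (A : ι → κ → ℚ) : Prop :=
  ∀ (k : ℕ) (c : ℝ → Fin (k + 1)), ∀ δ > (0 : ℝ), ∃ x : κ → ℝ, (∀ j, x j ∈ S) ∧
    ∃ m : Fin (k + 1), ∀ i, mEntry A x i ∈ S \ {0} ∧
      mEntry A x i ∈ Set.Ioo 0 δ ∧ c (mEntry A x i) = m

/-- `I(A;S)`. -/
def ISet {ι κ : Type} (S : Set ℝ) (A : ι → κ → ℚ) : Set (Ultrafilter ℝ) :=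
  {p | S ∈ p ∧ ∀ P ∈ p, ∃ x : κ → ℝ, (∀ j, x j ∈ S) ∧ ∀ i, mEntry A x i ∈ P}

/-- `O⁺(S)`. -/
def Oplus (S : Set ℝ) : Set (Ultrafilter ℝ) :=
  {p | ∀ ε > (0 : ℝ), Set.Ioo 0 ε ∩ S ∈ p}

/-- `I₀(A;S)`. -/
def I0Set {ι κ : Type} (S : Set ℝ) (A : ι → κ → ℚ) : Set (Ultrafilter ℝ) :=
  {p | S ∈ p ∧ ∀ P ∈ p, ∀ ε > (0 : ℝ), ∃ x : κ → ℝ, (∀ j, x j ∈ S) ∧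
      ∀ i, mEntry A x i ∈ P ∩ Set.Ioo 0 ε}

/-- multiplication of an ultrafilter by a real constant. -/
def mulU (c : ℝ) (p : Ultrafilter ℝ) : Ultrafilter ℝ := p.map fun x => c * x

/-- `q·p = q-lim_{n} (n·p)` for `q ∈ βℕ`, `p ∈ βℝ`. -/
def actU (q : Ultrafilter ℕ) (p : Ultrafilter ℝ) : Ultrafilter ℝ :=
  q.bind fun n => p.map fun x => (n : ℝ) * x

/-- `I` is a two-sided ideal of `T ⊆ βℝ`. -/
def IsIdealIn (T I : Set (Ultrafilter ℝ)) : Prop :=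
  I.Nonempty ∧ I ⊆ T ∧ ∀ p ∈ T, ∀ q ∈ I, uAdd p q ∈ I ∧ uAdd q p ∈ I

/-- the smallest two-sided ideal of `T`. -/
def KK (T : Set (Ultrafilter ℝ)) : Set (Ultrafilter ℝ) :=
  ⋂₀ {I | IsIdealIn T I}

/-- `L` is a left ideal of `T`. -/
def IsLeftIdealIn (T L : Set (Ultrafilter ℝ)) : Prop :=
  L.Nonempty ∧ L ⊆ T ∧ ∀ p ∈ T, ∀ q ∈ L, uAdd p q ∈ L

/-- `L` is a minimal left ideal of `T`. -/
def IsMinLeftIdealIn (T L : Set (Ultrafilter ℝ)) : Prop :=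
  IsLeftIdealIn T L ∧ ∀ L', IsLeftIdealIn T L' → L' ⊆ L → L' = L

/-- `C ⊆ S` is central near zero. -/
def CentralNearZero (S C : Set ℝ) : Prop :=
  ∃ p : Ultrafilter ℝ, p ∈ KK (Oplus S) ∧ uAdd p p = p ∧ C ∈ p

/-- `C` is central* near zero: it belongs to every minimal idempotent of `O⁺(S)`. -/
def CentralStarNearZero (S C : Set ℝ) : Prop :=
  ∀ p : Ultrafilter ℝ, p ∈ KK (Oplus S) → uAdd p p = p → C ∈ p

/-- `C` is IP* near zero: it belongs to every idempotent of `O⁺(S)`. -/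
def IPStarNearZero (S C : Set ℝ) : Prop :=
  ∀ p : Ultrafilter ℝ, p ∈ Oplus S → uAdd p p = p → C ∈ p

/-- `A` is centrally image partition regular near zero over `S`. -/
def CIPRNearZero {ι κ : Type} (S : Set ℝ) (A : ι → κ → ℚ) : Prop :=
  ∀ C : Set ℝ, CentralNearZero S C →
    ∃ x : κ → ℝ, (∀ j, x j ∈ S) ∧ ∀ i, mEntry A x i ∈ C

/-- `T` is thick near zero in `S`. -/
def ThickNearZero (S T : Set ℝ) : Prop :=
  ∃ L : Set (Ultrafilter ℝ), IsLeftIdealIn (Oplus S) L ∧ ∀ p ∈ L, T ∈ p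

/-- membership in the class `𝓜₀(S)`. -/
def MemM0 {ι κ : Type} (S : Set ℝ) (A : ι → κ → ℚ) : Prop :=
  Admissible A ∧ ∀ T : Set ℝ, ThickNearZero S T →
    ∀ (k : ℕ) (c : ℝ → Fin (k + 1)), ∃ x : κ → ℝ, (∀ j, x j ∈ S) ∧
      ∃ m : Fin (k + 1), ∀ i, mEntry A x i ∈ T ∧ c (mEntry A x i) = m

/-- `A` is (finite) image partition regular (over ℕ). -/
def IPRoverNat {u v : ℕ} (A : Fin u → Fin v → ℚ) : Prop :=
  ∀ (k : ℕ) (c : ℕ → Fin (k + 1)), ∃ x : Fin v → ℕ, ∃ m : Fin (k + 1),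
    ∀ i, ∃ n : ℕ, 0 < n ∧ (n : ℚ) = ∑ j, A i j * (x j : ℚ) ∧ c n = m

/-- the compressed form of a finitely supported integer vector: delete the zeros,
then collapse equal consecutive entries. -/
def compress (r : ℕ → ℤ) (hr : (Function.support r).Finite) : List ℤ :=
  ((hr.toFinset.sort (· ≤ ·)).map r).destutter (· ≠ ·)

/-- `M` is the Milliken–Taylor matrix `MT(a⃗)`: its rows are exactly the finitely
supported integer vectors with compressed form `a⃗`. -/
def IsMTMatrix (a : List ℤ) (M : ℕ → ℕ → ℚ) : Prop :=
  (∀ i, ∃ (r : ℕ → ℤ) (hr : (Function.support r).Finite),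
      (M i = fun j => (r j : ℚ)) ∧ compress r hr = a) ∧
  ∀ (r : ℕ → ℤ) (hr : (Function.support r).Finite),
    compress r hr = a → ∃ i, M i = fun j => (r j : ℚ)

/-- the sum `f 0 + (f 1 + (⋯ + f k))` in `(βℝ, +)`. -/
def finSumU : ∀ {k : ℕ}, (Fin (k + 1) → Ultrafilter ℝ) → Ultrafilter ℝ
  | 0, f => f 0
  | _ + 1, f => uAdd (f 0) (finSumU fun i => f i.succ)

end

/-- the matrix `(1̄ B 0 ; 0̄ 0 M)`. -/
def oneBM {ι κ ιM κM : Type} (B : ι → κ → ℚ) (M : ιM → κM → ℚ) :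
    ι ⊕ ιM → Unit ⊕ κ ⊕ κM → ℚ
  | Sum.inl _, Sum.inl _ => 1
  | Sum.inl i, Sum.inr (Sum.inl j) => B i j
  | Sum.inr i, Sum.inr (Sum.inr j) => M i j
  | _, _ => 0

/-- the iterated block matrix with row blocks `(0 ⋯ 0 1̄ Mᵢ 0 ⋯ 0)` for `i + 1 < n` and
`(0 ⋯ 0 Mᵢ)` for the last block (whose unit column is identically zero). -/
def blockN (n : ℕ) {ι κ : Fin n → Type} (M : ∀ i, ι i → κ i → ℚ) :
    (Σ i, ι i) → (Σ i, Unit ⊕ κ i) → ℚ := fun r c =>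
  if h : r.1 = c.1 then
    match c.2 with
    | Sum.inl _ => if (r.1 : ℕ) + 1 < n then 1 else 0
    | Sum.inr j => M r.1 r.2 (cast (congrArg κ h).symm j)
  else 0

/-!
A set `T` thick near zero belongs to every member of some closed left ideal `L` of `O⁺(S)` that is
minimal among closed left ideals, so that `O⁺(S) + r = L` for every `r ∈ L`. Compactness of `L` and
the definition of `𝓜₀(S)` give `p ∈ L ∩ I₀(M;S)` and `r ∈ L ∩ I₀(B;S)`. Writing `p = q + r` with
`q ∈ O⁺(S)`, for the colour class `C ∈ p` some `x₀ ∈ S` has `-x₀ + C ∈ r`; a `B`-image inside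
`-x₀ + C` and an `M`-image inside `C` combine into an image of `(1̄ B 0 ; 0̄ 0 M)` inside `C`.
After reindexing, the iterated block matrix for `M₁, …, Mₙ` is `(1̄ M₁ 0 ; 0̄ 0 N)` with `N` the one
for `M₂, …, Mₙ`; for `n = 1` it is `M₁` with a zero column added.
-/

open Set Function Filter

theorem mem_uAdd {p q : Ultrafilter ℝ} {A : Set ℝ} :
    A ∈ uAdd p q ↔ {x | {y | x + y ∈ A} ∈ q} ∈ p := Iff.rfl

theorem uAdd_assoc (p q r : Ultrafilter ℝ) : uAdd (uAdd p q) r = uAdd p (uAdd q r) :=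
  Ultrafilter.ext fun A => by simp only [mem_uAdd, mem_ofPred_eq, add_assoc]

theorem continuous_uAdd_right (q : Ultrafilter ℝ) : Continuous fun p => uAdd p q :=
  continuous_generateFrom_iff.mpr <| by
    rintro _ ⟨A, rfl⟩
    exact ultrafilter_isOpen_basic _

theorem isClosed_oplus (S : Set ℝ) : IsClosed (Oplus S) := by
  have : Oplus S = ⋂ ε ∈ Ioi (0 : ℝ), {p : Ultrafilter ℝ | Ioo 0 ε ∩ S ∈ p} := by
    ext p; simp [Oplus]
  rw [this]
  exact isClosed_biInter fun ε _ => ultrafilter_isClosed_basic _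

theorem uAdd_mem_oplus {S : Set ℝ} (hS : ∀ x ∈ S, ∀ y ∈ S, x + y ∈ S) {p q : Ultrafilter ℝ}
    (hp : p ∈ Oplus S) (hq : q ∈ Oplus S) : uAdd p q ∈ Oplus S := by
  intro ε hε
  refine mem_uAdd.2 <| mem_of_superset (hp (ε / 2) (half_pos hε)) fun x ⟨⟨hx0, hxε⟩, hxS⟩ => ?_
  refine mem_of_superset (hq (ε / 2) (half_pos hε)) fun y ⟨⟨hy0, hyε⟩, hyS⟩ => ?_
  exact ⟨⟨by linarith, by linarith⟩, hS x hxS y hyS⟩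

section LeftIdeal

variable {T L : Set (Ultrafilter ℝ)}

theorem isLeftIdealIn_image_uAdd_right (hT : ∀ p ∈ T, ∀ q ∈ T, uAdd p q ∈ T)
    {r : Ultrafilter ℝ} (hr : r ∈ T) : IsLeftIdealIn T ((uAdd · r) '' T) := by
  refine ⟨⟨_, mem_image_of_mem _ hr⟩, image_subset_iff.2 fun q hq => hT q hq r hr, ?_⟩
  rintro p hp _ ⟨q, hq, rfl⟩
  exact ⟨uAdd p q, hT p hp q hq, uAdd_assoc p q r⟩

theorem IsLeftIdealIn.image_uAdd_right_subset (hL : IsLeftIdealIn T L) {r : Ultrafilter ℝ}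
    (hr : r ∈ L) : (uAdd · r) '' T ⊆ L := by
  rintro _ ⟨q, hq, rfl⟩
  exact hL.2.2 q hq r hr

theorem isLeftIdealIn_sInter {c : Set (Set (Ultrafilter ℝ))} (hc : IsChain (· ⊆ ·) c)
    (hne : c.Nonempty) (hcL : ∀ L ∈ c, IsLeftIdealIn T L ∧ IsClosed L) :
    IsLeftIdealIn T (⋂₀ c) := by
  obtain ⟨L, hL⟩ := hne
  have : Nonempty c := ⟨⟨L, hL⟩⟩
  refine ⟨?_, (sInter_subset_of_mem hL).trans (hcL L hL).1.2.1, ?_⟩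
  · exact IsCompact.nonempty_sInter_of_directed_nonempty_isCompact_isClosed
      (IsChain.directedOn (r := (· ≥ ·)) hc.symm) (fun L hL => (hcL L hL).1.1)
      (fun L hL => (hcL L hL).2.isCompact) fun L hL => (hcL L hL).2
  · exact fun p hp q hq => mem_sInter.2 fun L hL => (hcL L hL).1.2.2 p hp q (hq L hL)

/-- Take `L` minimal among the closed left ideals inside `L₀` (Zorn, with Cantor's intersection
theorem for chains); each `T + r ⊆ L` is again one. -/
theorem exists_isClosed_isLeftIdealIn_image_eq (hTc : IsClosed T)
    (hT : ∀ p ∈ T, ∀ q ∈ T, uAdd p q ∈ T) {L₀ : Set (Ultrafilter ℝ)} (hL₀ : IsLeftIdealIn T L₀) :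
    ∃ L ⊆ L₀, IsLeftIdealIn T L ∧ IsClosed L ∧ ∀ r ∈ L, (uAdd · r) '' T = L := by
  obtain ⟨r₀, hr₀⟩ := hL₀.1
  have hclosed : ∀ r, IsClosed ((uAdd · r) '' T) := fun r =>
    (hTc.isCompact.image (continuous_uAdd_right r)).isClosed
  obtain ⟨L, -, hLmin⟩ := zorn_superset_nonempty {L | L ⊆ L₀ ∧ IsLeftIdealIn T L ∧ IsClosed L}
    (fun c hcS hc hne => ⟨⋂₀ c, ⟨(sInter_subset_of_mem hne.some_mem).trans (hcS hne.some_mem).1,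
      isLeftIdealIn_sInter hc hne fun L hL => (hcS hL).2, isClosed_sInter fun L hL => (hcS hL).2.2⟩,
      fun _ => sInter_subset_of_mem⟩)
    _ ⟨hL₀.image_uAdd_right_subset hr₀, isLeftIdealIn_image_uAdd_right hT (hL₀.2.1 hr₀), hclosed r₀⟩
  obtain ⟨hLL₀, hL, hLc⟩ := hLmin.prop
  refine ⟨L, hLL₀, hL, hLc, fun r hr => ?_⟩
  have hsub := hL.image_uAdd_right_subset hr
  exact hLmin.eq_of_subset ⟨hsub.trans hLL₀, isLeftIdealIn_image_uAdd_right hT (hL.2.1 hr),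
    hclosed r⟩ hsub

end LeftIdeal

section MemM0

variable {S T : Set ℝ} {ι κ : Type} {A : ι → κ → ℚ}

theorem ThickNearZero.exists_ultrafilter (hT : ThickNearZero S T) :
    ∃ p : Ultrafilter ℝ, S ∈ p ∧ T ∈ p := by
  obtain ⟨L, hL, hTL⟩ := hT
  obtain ⟨p, hp⟩ := hL.1
  exact ⟨p, mem_of_superset (hL.2.1 hp 1 one_pos) inter_subset_right, hTL p hp⟩

theorem MemM0.exists_forall_mem_of_subset_iUnion {J : Type} [Finite J] (hA : MemM0 S A)
    (hT : ThickNearZero S T) {U : J → Set ℝ} (hU : T ⊆ ⋃ j, U j) :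
    ∃ x : κ → ℝ, (∀ j, x j ∈ S) ∧ ∃ j, ∀ i, mEntry A x i ∈ U j := by
  obtain ⟨p, -, hTp⟩ := hT.exists_ultrafilter
  obtain ⟨j₀, -⟩ := mem_iUnion.1 (hU (Ultrafilter.nonempty_of_mem hTp).some_mem)
  obtain ⟨n, ⟨e⟩⟩ := Finite.exists_equiv_fin J
  obtain ⟨k, rfl⟩ : ∃ k, n = k + 1 := Nat.exists_eq_succ_of_ne_zero (e j₀).pos.ne'
  have : Nonempty J := ⟨j₀⟩
  choose! g hg using fun t (ht : t ∈ T) => mem_iUnion.1 (hU ht)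
  obtain ⟨x, hxS, m, hx⟩ := hA.2 T hT k (e ∘ g)
  refine ⟨x, hxS, e.symm m, fun i => ?_⟩
  rw [← (hx i).2, comp_apply, e.symm_apply_apply]
  exact hg _ (hx i).1

theorem MemM0.inter_I0Set_nonempty (hA : MemM0 S A) {L : Set (Ultrafilter ℝ)}
    (hL : IsLeftIdealIn (Oplus S) L) (hLc : IsClosed L) : (L ∩ I0Set S A).Nonempty := by
  by_contra hempty
  have hbad : ∀ p : L, ∃ U ∈ (p : Ultrafilter ℝ),
      ∀ x : κ → ℝ, (∀ j, x j ∈ S) → ∃ i, mEntry A x i ∉ U := by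
    rintro ⟨p, hp⟩
    have hpI : p ∉ I0Set S A := fun h => hempty ⟨p, hp, h⟩
    simp only [I0Set, mem_ofPred_eq, not_and, not_forall, not_exists] at hpI
    obtain ⟨P, hP, ε, hε, hPε⟩ := hpI (mem_of_superset (hL.2.1 hp 1 one_pos) inter_subset_right)
    exact ⟨P ∩ Ioo 0 ε, inter_mem hP (mem_of_superset (hL.2.1 hp ε hε) inter_subset_left),
      hPε⟩
  choose U hUp hU using hbad
  obtain ⟨t, ht⟩ := hLc.isCompact.elim_finite_subcover (fun p : L => {q : Ultrafilter ℝ | U p ∈ q})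
    (fun p => ultrafilter_isOpen_basic _) fun q hq => mem_iUnion.2 ⟨⟨q, hq⟩, hUp ⟨q, hq⟩⟩
  have hthick : ThickNearZero S (⋃ p : t, U p) := by
    refine ⟨L, hL, fun q hq => ?_⟩
    obtain ⟨p, hpt, hpq⟩ := mem_iUnion₂.1 (ht hq)
    exact mem_of_superset hpq (subset_iUnion_of_subset ⟨p, hpt⟩ subset_rfl)
  obtain ⟨x, hxS, p, hp⟩ := hA.exists_forall_mem_of_subset_iUnion hthick subset_rfl
  obtain ⟨i, hi⟩ := hU p x hxS
  exact hi (hp i)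

end MemM0

theorem finsum_comp_of_support_subset_range {α β M : Type*} [AddCommMonoid M] {f : β → M}
    {e : α → β} (he : Injective e) (hf : support f ⊆ range e) : ∑ᶠ a, f (e a) = ∑ᶠ b, f b := by
  rw [← finsum_mem_range he, ← finsum_mem_univ f]
  exact finsum_mem_inter_support_eq' f _ _ fun b hb => by simp [hf hb]

theorem finsum_sum_type {α β M : Type*} [AddCommMonoid M] {f : α ⊕ β → M}
    (hf : (support f).Finite) : ∑ᶠ x, f x = ∑ᶠ a, f (Sum.inl a) + ∑ᶠ b, f (Sum.inr b) := by
  rw [← finsum_mem_univ f, ← range_inl_union_range_inr,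
    finsum_mem_union' isCompl_range_inl_range_inr.disjoint (hf.subset inter_subset_right)
      (hf.subset inter_subset_right), finsum_mem_range Sum.inl_injective,
    finsum_mem_range Sum.inr_injective]

section mEntry

variable {ι κ κ' : Type}

theorem support_mEntry_summand_subset (A : ι → κ → ℚ) (x : κ → ℝ) (i : ι) :
    support (fun j => (A i j : ℝ) * x j) ⊆ support (A i) :=
  fun j hj h0 => hj (by simp [h0])

theorem mEntry_eq_of_support_subset_range {A : ι → κ' → ℚ} {e : κ → κ'} (he : Injective e) {i : ι}
    (hA : support (A i) ⊆ range e) (x : κ' → ℝ) :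
    mEntry A x i = mEntry (fun i j => A i (e j)) (x ∘ e) i :=
  (finsum_comp_of_support_subset_range he ((support_mEntry_summand_subset A x i).trans hA)).symm

end mEntry

section OneBM

variable {ι κ ιM κM : Type} (B : ι → κ → ℚ) (M : ιM → κM → ℚ)

theorem support_oneBM_inl_subset (i : ι) : support (oneBM B M (Sum.inl i)) ⊆
    range Sum.inl ∪ (Sum.inr ∘ Sum.inl) '' support (B i) := by
  rintro (u | j | j) hj
  · exact Or.inl ⟨u, rfl⟩
  · exact Or.inr ⟨j, hj, rfl⟩
  · exact absurd rfl hj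

theorem support_oneBM_inr_subset (i : ιM) :
    support (oneBM B M (Sum.inr i)) ⊆ (Sum.inr ∘ Sum.inr) '' support (M i) := by
  rintro (u | j | j) hj
  · exact absurd rfl hj
  · exact absurd rfl hj
  · exact ⟨j, hj, rfl⟩

variable {B M}

theorem admissible_oneBM (hB : Admissible B) (hM : Admissible M) : Admissible (oneBM B M) := by
  refine ⟨?_, ?_⟩
  · rintro (i | i) h
    · simpa [oneBM] using congrFun h (Sum.inl ())
    · obtain ⟨j, hj⟩ := Function.ne_iff.1 (hM.1 i)
      exact hj (congrFun h (Sum.inr (Sum.inr j)))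
  · rintro (i | i)
    · exact ((finite_range _).union ((hB.2 i).image _)).subset (support_oneBM_inl_subset B M i)
    · exact ((hM.2 i).image _).subset (support_oneBM_inr_subset B M i)

theorem mEntry_oneBM_inl {i : ι} (hBi : (support (B i)).Finite) (x : Unit ⊕ κ ⊕ κM → ℝ) :
    mEntry (oneBM B M) x (Sum.inl i) = x (Sum.inl ()) + mEntry B (x ∘ Sum.inr ∘ Sum.inl) i := by
  have hfin : (support fun j => (oneBM B M (Sum.inl i) j : ℝ) * x j).Finite :=
    (((finite_range _).union (hBi.image _)).subset (support_oneBM_inl_subset B M i)).subset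
      (support_mEntry_summand_subset _ x _)
  have hsupp : support (fun j => oneBM B M (Sum.inl i) (Sum.inr j)) ⊆ range Sum.inl := by
    rintro (j | j) hj
    · exact ⟨j, rfl⟩
    · exact absurd rfl hj
  rw [mEntry, finsum_sum_type hfin, finsum_unique]
  congr 1
  · simp [oneBM]
  · exact mEntry_eq_of_support_subset_range (A := fun i j => oneBM B M i (Sum.inr j))
      Sum.inl_injective hsupp (x ∘ Sum.inr)

theorem mEntry_oneBM_inr (x : Unit ⊕ κ ⊕ κM → ℝ) (i : ιM) :
    mEntry (oneBM B M) x (Sum.inr i) = mEntry M (x ∘ Sum.inr ∘ Sum.inr) i :=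
  mEntry_eq_of_support_subset_range (Sum.inr_injective.comp Sum.inr_injective)
    ((support_oneBM_inr_subset B M i).trans (image_subset_range _ _)) x

end OneBM

theorem memM0_oneBM {S : Set ℝ} {ι κ ιM κM : Type} {B : ι → κ → ℚ} {M : ιM → κM → ℚ}
    (hS : ∀ x ∈ S, ∀ y ∈ S, x + y ∈ S) (hB : MemM0 S B) (hM : MemM0 S M) :
    MemM0 S (oneBM B M) := by
  refine ⟨admissible_oneBM hB.1 hM.1, fun T ⟨L₀, hL₀, hTL₀⟩ k c => ?_⟩
  obtain ⟨L, hLL₀, hL, hLc, hLimage⟩ := exists_isClosed_isLeftIdealIn_image_eq (isClosed_oplus S)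
    (fun p hp q hq => uAdd_mem_oplus hS hp hq) hL₀
  obtain ⟨p, hpL, hpM⟩ := hM.inter_I0Set_nonempty hL hLc
  obtain ⟨r, hrL, hrB⟩ := hB.inter_I0Set_nonempty hL hLc
  obtain ⟨m, -, hm⟩ := (Ultrafilter.finite_biUnion_mem_iff (s := fun m => T ∩ c ⁻¹' {m})
    finite_univ).1 <| mem_of_superset (hTL₀ p (hLL₀ hpL)) fun t ht =>
      mem_biUnion (mem_univ (c t)) ⟨ht, rfl⟩
  obtain ⟨z, hzS, hz⟩ := hpM.2 _ hm 1 one_pos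
  obtain ⟨q, hq, rfl⟩ : p ∈ (uAdd · r) '' Oplus S := (hLimage r hrL).symm ▸ hpL
  obtain ⟨x₀, hx₀, -, hx₀S⟩ := Filter.nonempty_of_mem (inter_mem (mem_uAdd.1 hm) (hq 1 one_pos))
  obtain ⟨y, hyS, hy⟩ := hrB.2 _ hx₀ 1 one_pos
  refine ⟨Sum.elim (fun _ => x₀) (Sum.elim y z), ?_, m, ?_⟩
  · rintro (u | j | j)
    exacts [hx₀S, hyS j, hzS j]
  · rintro (i | i)
    · rw [mEntry_oneBM_inl (hB.1.2 i)]
      exact (hy i).1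
    · rw [mEntry_oneBM_inr]
      exact (hz i).1

theorem MemM0.of_submatrix_of_support_subset_range {S : Set ℝ} {ι κ ι' κ' : Type} {A : ι → κ → ℚ}
    {A' : ι' → κ' → ℚ} (hA : MemM0 S A) (f : ι' → ι) {e : κ → κ'} (he : Injective e)
    (hsupp : ∀ r, support (A' r) ⊆ range e) (hA' : ∀ r c, A' r (e c) = A (f r) c) :
    MemM0 S A' := by
  have hsupp' : ∀ r, support (A' r) ⊆ e '' support (A (f r)) := fun r c hc => by
    obtain ⟨c, rfl⟩ := hsupp r hc
    exact mem_image_of_mem e (by rwa [mem_support, ← hA'])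
  refine ⟨⟨fun r h => hA.1.1 (f r) (funext fun c => by rw [← hA', h]; rfl),
    fun r => ((hA.1.2 (f r)).image e).subset (hsupp' r)⟩, fun T hT k col => ?_⟩
  obtain ⟨s₀, hs₀⟩ : S.Nonempty :=
    let ⟨_, hSp, _⟩ := hT.exists_ultrafilter
    Ultrafilter.nonempty_of_mem hSp
  obtain ⟨x, hxS, m, hx⟩ := hA.2 T hT k col
  refine ⟨extend e x fun _ => s₀, fun j => ?_, m, fun r => ?_⟩
  · by_cases h : ∃ c, e c = j
    · obtain ⟨c, rfl⟩ := h
      rw [he.extend_apply]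
      exact hxS c
    · rw [extend_apply' _ _ _ h]
      exact hs₀
  · rw [mEntry_eq_of_support_subset_range he (hsupp r), extend_comp he]
    simp only [hA']
    exact hx (f r)

section BlockN

variable {S : Set ℝ}

theorem memM0_blockN_zero {ι κ : Fin 0 → Type} (Mf : ∀ i, ι i → κ i → ℚ) :
    MemM0 S (blockN 0 Mf) :=
  ⟨⟨fun r => r.1.elim0, fun r => r.1.elim0⟩,
    fun _ _ _ _ => ⟨fun c => c.1.elim0, fun c => c.1.elim0, 0, fun r => r.1.elim0⟩⟩

theorem memM0_blockN_one {ι κ : Fin 1 → Type} {Mf : ∀ i, ι i → κ i → ℚ} (h : MemM0 S (Mf 0)) :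
    MemM0 S (blockN 1 Mf) := by
  refine h.of_submatrix_of_support_subset_range
    (fun r => Fin.cases (motive := fun i => ι i → ι 0) id (fun j => j.elim0) r.1 r.2)
    (e := fun c => ⟨0, Sum.inr c⟩) (fun c c' h => by simpa using h) ?_ ?_
  · rintro ⟨i, a⟩ ⟨j, u | c⟩ hc
    · fin_cases i; fin_cases j
      simp [blockN] at hc
    · fin_cases j
      exact ⟨c, rfl⟩
  · rintro ⟨i, a⟩ c
    fin_cases i
    rfl

theorem memM0_blockN_succ_succ {n : ℕ} {ι κ : Fin (n + 2) → Type} {Mf : ∀ i, ι i → κ i → ℚ}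
    (h : MemM0 S (oneBM (Mf 0) (blockN (n + 1) fun i => Mf i.succ))) :
    MemM0 S (blockN (n + 2) Mf) := by
  refine h.of_submatrix_of_support_subset_range
    (fun r => Fin.cases (motive := fun i => ι i → ι 0 ⊕ Σ j : Fin (n + 1), ι j.succ)
      Sum.inl (fun j a => Sum.inr ⟨j, a⟩) r.1 r.2)
    (e := Sum.elim (fun u => ⟨0, Sum.inl u⟩)
      (Sum.elim (fun c => ⟨0, Sum.inr c⟩) fun c => ⟨c.1.succ, c.2⟩)) ?_ ?_ ?_
  · rintro (u | c | ⟨j, c⟩) (u' | c' | ⟨j', c'⟩) h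
    all_goals simp_all [Fin.succ_ne_zero, (Fin.succ_ne_zero _).symm]
  · rintro - ⟨i, u⟩ -
    cases i using Fin.cases with
    | zero => rcases u with u | c; exacts [⟨Sum.inl u, rfl⟩, ⟨Sum.inr (Sum.inl c), rfl⟩]
    | succ i => exact ⟨Sum.inr (Sum.inr ⟨i, u⟩), rfl⟩
  · rintro ⟨i, a⟩ (u | c | ⟨j, c⟩)
    all_goals cases i using Fin.cases
    all_goals simp [blockN, oneBM]
    · rfl
    · exact fun h => absurd h.symm (Fin.succ_ne_zero _)
    · rename_i i
      by_cases hij : i = j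
      · subst hij
        rcases c with u | c
        · simp
        · rfl
      · simp [hij]

theorem memM0_blockN (hS : ∀ x ∈ S, ∀ y ∈ S, x + y ∈ S) :
    ∀ (n : ℕ) {ι κ : Fin n → Type} (Mf : ∀ i, ι i → κ i → ℚ),
      (∀ i, MemM0 S (Mf i)) → MemM0 S (blockN n Mf)
  | 0, _, _, Mf, _ => memM0_blockN_zero Mf
  | 1, _, _, _, h => memM0_blockN_one (h 0)
  | n + 2, _, _, _, h => memM0_blockN_succ_succ <|
      memM0_oneBM hS (h 0) (memM0_blockN hS (n + 1) _ fun i => h i.succ)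

end BlockN

theorem stmt18_general {ι κ ιM κM : Type}
    (S : Set ℝ) (hS : IsPosSubsemigroup S)
    (B : ι → κ → ℚ) (hB : MemM0 S B) (M : ιM → κM → ℚ) (hM : MemM0 S M) :
    MemM0 S (oneBM B M) ∧
      ∀ (n : ℕ) (ιf κf : Fin n → Type) (Mf : ∀ i, ιf i → κf i → ℚ),
        (∀ i, MemM0 S (Mf i)) → MemM0 S (blockN n Mf) :=
  ⟨memM0_oneBM hS.2.2 hB hM, fun n _ _ Mf => memM0_blockN hS.2.2 n Mf⟩

/-- If `B, M ∈ 𝓜₀(S)` then `(1̄ B 0 ; 0̄ 0 M) ∈ 𝓜₀(S)`; consequently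
for any `n ∈ ℕ` and `M₁, …, Mₙ ∈ 𝓜₀(S)` the iterated block matrix with rows
`(1̄ M₁ 0 ⋯ 0)`, `(0 0 1̄ M₂ ⋯ 0)`, …, `(0 ⋯ 0 Mₙ)` belongs to `𝓜₀(S)`. -/
theorem stmt18 {ι κ ιM κM : Type} [Countable ι] [Countable κ] [Countable ιM]
    [Countable κM] [Nonempty ι] [Nonempty κ]
    (S : Set ℝ) (hS : IsPosSubsemigroup S) (hd : DenseNearZero S)
    (B : ι → κ → ℚ) (hB : MemM0 S B) (M : ιM → κM → ℚ) (hM : MemM0 S M) :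
    MemM0 S (oneBM B M) ∧
      ∀ (n : ℕ) (ιf κf : Fin n → Type) (Mf : ∀ i, ιf i → κf i → ℚ),
        (∀ i, MemM0 S (Mf i)) → MemM0 S (blockN n Mf) :=
  stmt18_general S hS B hB M hM
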